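/- arXiv:1912.07252 — 6 statements merged into one kernel-verified Lean document; each statement's English description precedes it below -/
import Mathlib

section
/- Let G be a countable group, let F = (F_n) be a Følner sequence in G, and let A be a subset of G with upper density d̄_F(A) > 0. Then there exists a left-translation-invariant finitely additive probability measure μ defined on all subsets of G such that μ(A) = d̄_F(A) and, for every r ≥ 1 and all elements g_1, …, g_r of G, one has d̄_F(g_1·A ∩ … ∩ g_r·A) ≥ μ(g_1·A ∩ … ∩ g_r·A). -/
open Filter Pointwise
open scoped Classical

/-- `F` is a (left) Følner sequence in the group `G`: a sequence of finite nonempty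
subsets whose cardinalities tend to infinity and with `|F n ∩ g • F n| / |F n| → 1`
for every `g : G`. -/
def IsFolner {G : Type*} [Group G] (F : ℕ → Finset G) : Prop :=
  (∀ n, (F n).Nonempty) ∧
    Tendsto (fun n => (F n).card) atTop atTop ∧
    ∀ g : G, Tendsto
      (fun n => (((F n) ∩ (F n).image (g * ·)).card : ℝ) / ((F n).card : ℝ))
      atTop (nhds 1)

/-- The upper density of `A ⊆ G` with respect to the sequence `F`:
`d̄_F(A) = limsup_n |A ∩ F n| / |F n|`. -/
noncomputable def upperDensity {G : Type*} [Group G] (F : ℕ → Finset G) (A : Set G) : ℝ :=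
  limsup (fun n => (((F n).filter (· ∈ A)).card : ℝ) / ((F n).card : ℝ)) atTop

/-!
Let `U` be an ultrafilter on `ℕ`, finer than `atTop`, along which `|A ∩ F n| / |F n|` tends to
`d̄_F(A)` (the limsup is a cluster point of the sequence). Then `μ B` is the limit along `U` of
`|B ∩ F n| / |F n|`, which exists by compactness of `[0, 1]`. Finite additivity holds termwise,
left invariance follows from the Følner property, and a limit along `U ≤ atTop` is at most the
limsup along `atTop`.
-/

open scoped Topology

section RelDensity

variable {α : Type*}

noncomputable def relDensity (S : Finset α) (B : Set α) : ℝ :=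
  ((S.filter (· ∈ B)).card : ℝ) / (S.card : ℝ)

lemma relDensity_nonneg (S : Finset α) (B : Set α) : 0 ≤ relDensity S B := by
  unfold relDensity; positivity

lemma relDensity_le_one (S : Finset α) (B : Set α) : relDensity S B ≤ 1 :=
  div_le_one_of_le₀ (by exact_mod_cast Finset.card_filter_le _ _) (Nat.cast_nonneg _)

lemma relDensity_univ {S : Finset α} (hS : S.Nonempty) : relDensity S Set.univ = 1 := by
  simp only [relDensity, Set.mem_univ, Finset.filter_true]
  exact div_self (Nat.cast_ne_zero.mpr hS.card_pos.ne')

lemma relDensity_union (S : Finset α) {B B' : Set α} (h : Disjoint B B') :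
    relDensity S (B ∪ B') = relDensity S B + relDensity S B' := by
  have hdisj : Disjoint (S.filter (· ∈ B)) (S.filter (· ∈ B')) :=
    Finset.disjoint_filter.mpr fun _ _ hB => Set.disjoint_left.mp h hB
  simp only [relDensity, Set.mem_union, Finset.filter_or]
  rw [Finset.card_union_of_disjoint hdisj, Nat.cast_add, add_div]

lemma card_filter_le_card_filter_add_card_sdiff [DecidableEq α] (S T : Finset α) (p : α → Prop)
    [DecidablePred p] : (S.filter p).card ≤ (T.filter p).card + (S \ T).card :=
  calc (S.filter p).card ≤ (S.filter p \ T.filter p).card + (T.filter p).card :=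
        Finset.card_le_card_sdiff_add_card
    _ ≤ (S \ T).card + (T.filter p).card := by
        refine Nat.add_le_add_right (Finset.card_le_card fun x => ?_) _
        simp only [Finset.mem_sdiff, Finset.mem_filter]
        tauto
    _ = (T.filter p).card + (S \ T).card := add_comm _ _

lemma abs_relDensity_sub_le {S T : Finset α} (hST : T.card = S.card) (B : Set α) :
    |relDensity T B - relDensity S B| ≤ 1 - ((S ∩ T).card : ℝ) / S.card := by
  rcases S.eq_empty_or_nonempty with rfl | hS
  · simp_all [relDensity]
  have hk : (0 : ℝ) < S.card := by exact_mod_cast hS.card_pos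
  have hST' : ((S \ T).card : ℝ) = S.card - (S ∩ T).card := by
    rw [eq_sub_iff_add_eq]; exact_mod_cast Finset.card_sdiff_add_card_inter S T
  have hTS' : ((T \ S).card : ℝ) = S.card - (S ∩ T).card := by
    rw [eq_sub_iff_add_eq, Finset.inter_comm, ← hST]
    exact_mod_cast Finset.card_sdiff_add_card_inter T S
  have hle₁ : ((S.filter (· ∈ B)).card : ℝ) ≤ (T.filter (· ∈ B)).card + (S \ T).card := by
    exact_mod_cast card_filter_le_card_filter_add_card_sdiff S T _
  have hle₂ : ((T.filter (· ∈ B)).card : ℝ) ≤ (S.filter (· ∈ B)).card + (T \ S).card := by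
    exact_mod_cast card_filter_le_card_filter_add_card_sdiff T S _
  rw [relDensity, relDensity, hST, div_sub_div_same, abs_div, abs_of_pos hk,
    one_sub_div hk.ne', div_le_div_iff_of_pos_right hk]
  exact abs_sub_le_iff.mpr ⟨by linarith, by linarith⟩

lemma isBoundedUnder_le_relDensity {ι : Type*} (l : Filter ι) (F : ι → Finset α) (B : Set α) :
    IsBoundedUnder (· ≤ ·) l (fun i => relDensity (F i) B) :=
  isBoundedUnder_of ⟨1, fun _ => relDensity_le_one _ _⟩

lemma isCoboundedUnder_le_relDensity {ι : Type*} (l : Filter ι) [l.NeBot] (F : ι → Finset α)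
    (B : Set α) : IsCoboundedUnder (· ≤ ·) l (fun i => relDensity (F i) B) :=
  isCoboundedUnder_le_of_le l (fun _ => relDensity_nonneg _ _)

end RelDensity

section UltraDensity

variable {α : Type*} (U : Ultrafilter ℕ) (F : ℕ → Finset α)

noncomputable def ultraDensity (B : Set α) : ℝ :=
  limUnder (U : Filter ℕ) (fun n => relDensity (F n) B)

lemma tendsto_ultraDensity (B : Set α) :
    Tendsto (fun n => relDensity (F n) B) (U : Filter ℕ) (𝓝 (ultraDensity U F B)) := by
  have hIcc : (U.map (fun n => relDensity (F n) B) : Filter ℝ) ≤ 𝓟 (Set.Icc 0 1) :=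
    le_principal_iff.mpr <| mem_map.mpr <| univ_mem' fun _ => ⟨relDensity_nonneg _ _, relDensity_le_one _ _⟩
  obtain ⟨c, -, hc⟩ := isCompact_Icc.ultrafilter_le_nhds _ hIcc
  exact tendsto_nhds_limUnder ⟨c, hc⟩

variable {U F}

lemma ultraDensity_eq_of_tendsto {B : Set α} {c : ℝ}
    (h : Tendsto (fun n => relDensity (F n) B) (U : Filter ℕ) (𝓝 c)) : ultraDensity U F B = c :=
  tendsto_nhds_unique (tendsto_ultraDensity U F B) h

lemma ultraDensity_nonneg (B : Set α) : 0 ≤ ultraDensity U F B :=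
  ge_of_tendsto' (tendsto_ultraDensity U F B) fun _ => relDensity_nonneg _ _

lemma ultraDensity_univ (hF : ∀ n, (F n).Nonempty) : ultraDensity U F Set.univ = 1 :=
  ultraDensity_eq_of_tendsto <| tendsto_const_nhds.congr fun n => (relDensity_univ (hF n)).symm

lemma ultraDensity_union {B B' : Set α} (h : Disjoint B B') :
    ultraDensity U F (B ∪ B') = ultraDensity U F B + ultraDensity U F B' :=
  ultraDensity_eq_of_tendsto <| ((tendsto_ultraDensity U F B).add
    (tendsto_ultraDensity U F B')).congr fun n => (relDensity_union (F n) h).symm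

end UltraDensity

section Group

variable {G : Type*} [Group G]

lemma relDensity_smul_set (S : Finset G) (g : G) (B : Set G) :
    relDensity S (g • B) = relDensity (S.image (g⁻¹ * ·)) B := by
  unfold relDensity
  rw [Finset.filter_image, Finset.card_image_of_injective _ (mul_right_injective g⁻¹),
    Finset.card_image_of_injective _ (mul_right_injective g⁻¹)]
  simp only [Set.mem_smul_set_iff_inv_smul_mem, smul_eq_mul]

lemma IsFolner.tendsto_relDensity_smul_sub {F : ℕ → Finset G} (hF : IsFolner F) (g : G)
    (B : Set G) :
    Tendsto (fun n => relDensity (F n) (g • B) - relDensity (F n) B) atTop (𝓝 0) := by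
  have hdefect : Tendsto (fun n => 1 - ((F n ∩ (F n).image (g⁻¹ * ·)).card : ℝ) / (F n).card)
      atTop (𝓝 0) := by
    simpa using (hF.2.2 g⁻¹).const_sub 1
  refine squeeze_zero_norm (fun n => ?_) hdefect
  rw [relDensity_smul_set, Real.norm_eq_abs]
  exact abs_relDensity_sub_le (Finset.card_image_of_injective _ (mul_right_injective g⁻¹)) B

variable {U : Ultrafilter ℕ} {F : ℕ → Finset G}

lemma ultraDensity_smul (hF : IsFolner F) (hU : (U : Filter ℕ) ≤ atTop) (g : G) (B : Set G) :
    ultraDensity U F (g • B) = ultraDensity U F B := by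
  refine ultraDensity_eq_of_tendsto ?_
  simpa using ((hF.tendsto_relDensity_smul_sub g B).mono_left hU).add (tendsto_ultraDensity U F B)

lemma ultraDensity_le_upperDensity (hU : (U : Filter ℕ) ≤ atTop) (B : Set G) :
    ultraDensity U F B ≤ upperDensity F B :=
  calc ultraDensity U F B = limsup (fun n => relDensity (F n) B) (U : Filter ℕ) :=
        (tendsto_ultraDensity U F B).limsup_eq.symm
    _ ≤ upperDensity F B :=
        limsup_le_limsup_of_le hU (isCoboundedUnder_le_relDensity _ _ _)
          (isBoundedUnder_le_relDensity _ _ _)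

lemma exists_ultraDensity_eq_upperDensity (F : ℕ → Finset G) (A : Set G) :
    ∃ U : Ultrafilter ℕ, (U : Filter ℕ) ≤ atTop ∧ ultraDensity U F A = upperDensity F A := by
  obtain ⟨U, hU, hA⟩ := mapClusterPt_iff_ultrafilter.mp <|
    MapClusterPt.limsup (isCoboundedUnder_le_relDensity atTop F A)
      (isBoundedUnder_le_relDensity atTop F A)
  exact ⟨U, hU, ultraDensity_eq_of_tendsto hA⟩

end Group

theorem folner_measure_exists_general {G : Type*} [Group G]
    (F : ℕ → Finset G) (hF : IsFolner F)
    (A : Set G) :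
    ∃ μ : Set G → ℝ,
      (∀ B : Set G, 0 ≤ μ B) ∧
      μ Set.univ = 1 ∧
      (∀ B B' : Set G, Disjoint B B' → μ (B ∪ B') = μ B + μ B') ∧
      (∀ (g : G) (B : Set G), μ (g • B) = μ B) ∧
      μ A = upperDensity F A ∧
      (∀ (r : ℕ), 1 ≤ r → ∀ g : Fin r → G,
        μ (⋂ i, g i • A) ≤ upperDensity F (⋂ i, g i • A)) := by
  obtain ⟨U, hU, hA⟩ := exists_ultraDensity_eq_upperDensity F A
  exact ⟨ultraDensity U F, ultraDensity_nonneg, ultraDensity_univ hF.1,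
    fun _ _ => ultraDensity_union, ultraDensity_smul hF hU, hA,
    fun _ _ _ => ultraDensity_le_upperDensity hU _⟩

/-- Fact 1.6: for a subset `A` of positive upper density with respect to a Følner
sequence `F` in a countable group `G`, there is a left-translation-invariant
finitely additive probability measure `μ` on all subsets of `G` with
`μ(A) = d̄_F(A)` and `d̄_F(g₁A ∩ … ∩ g_r A) ≥ μ(g₁A ∩ … ∩ g_r A)` for all
`g₁, …, g_r ∈ G`. -/
theorem folner_measure_exists {G : Type*} [Group G] [Countable G]
    (F : ℕ → Finset G) (hF : IsFolner F)
    (A : Set G) (hA : 0 < upperDensity F A) :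
    ∃ μ : Set G → ℝ,
      (∀ B : Set G, 0 ≤ μ B) ∧
      μ Set.univ = 1 ∧
      (∀ B B' : Set G, Disjoint B B' → μ (B ∪ B') = μ B + μ B') ∧
      (∀ (g : G) (B : Set G), μ (g • B) = μ B) ∧
      μ A = upperDensity F A ∧
      (∀ (r : ℕ), 1 ≤ r → ∀ g : Fin r → G,
        μ (⋂ i, g i • A) ≤ upperDensity F (⋂ i, g i • A)) :=
  folner_measure_exists_general F hF A
end

section
/- For every subset A of ℤ, the upper Banach density of A defined via Følner sequences equals the interval-based upper Banach density; that is, sup_F d̄_F(A), where the supremum ranges over all Følner sequences F in the additive group ℤ, equals limsup_{n→∞} sup_{m∈ℤ} |A ∩ [m+1, m+n]|/n. -/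
/-!
Write `B n = sup_m |A ∩ [m+1, m+n]| / n`. Choosing for each `n` an interval of length `n`
on which this supremum is attained gives a Følner sequence along which the density of `A`
is `limsup B`. Conversely, for a Følner sequence `F` and fixed `n`, count the pairs
`(x, t) ∈ F × [1, n]` with `x + t ∈ A`: grouped by `x` they number at most `|F| · n · B n`,
and grouped by `t` at least `n |A ∩ F| - ∑ t, |F \ (t + F)|`. The error term is `o(|F|)`,
so the upper density along `F` is at most every `B n`, hence at most `limsup B`.
-/

open Filter
open scoped Classical

/-- `F` is a Følner sequence in the additive group `ℤ`. -/
def IsFolnerZ (F : ℕ → Finset ℤ) : Prop :=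
  (∀ n, (F n).Nonempty) ∧
    Tendsto (fun n => (F n).card) atTop atTop ∧
    ∀ g : ℤ, Tendsto
      (fun n => (((F n) ∩ (F n).image (g + ·)).card : ℝ) / ((F n).card : ℝ))
      atTop (nhds 1)

/-- The upper density of `A ⊆ ℤ` with respect to the sequence `F`. -/
noncomputable def upperDensityZ (F : ℕ → Finset ℤ) (A : Set ℤ) : ℝ :=
  limsup (fun n => (((F n).filter (· ∈ A)).card : ℝ) / ((F n).card : ℝ)) atTop

open Finset

noncomputable def intervalDensity (A : Set ℤ) (n : ℕ) (m : ℤ) : ℝ :=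
  (#((Icc (m + 1) (m + (n : ℤ))).filter (· ∈ A)) : ℝ) / n

noncomputable def maxIntervalDensity (A : Set ℤ) (n : ℕ) : ℝ :=
  ⨆ m : ℤ, intervalDensity A n m

lemma card_Icc_add_one_add (a : ℤ) (n : ℕ) : #(Icc (a + 1) (a + n)) = n := by
  rw [Int.card_Icc]; omega

lemma card_filter_Icc_add_one_add_le (A : Set ℤ) (n : ℕ) (m : ℤ) :
    #((Icc (m + 1) (m + n)).filter (· ∈ A)) ≤ n :=
  (card_filter_le _ _).trans (card_Icc_add_one_add m n).le

lemma intervalDensity_nonneg (A : Set ℤ) (n : ℕ) (m : ℤ) : 0 ≤ intervalDensity A n m := by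
  unfold intervalDensity; positivity

lemma intervalDensity_le_one (A : Set ℤ) (n : ℕ) (m : ℤ) : intervalDensity A n m ≤ 1 :=
  div_le_one_of_le₀ (by exact_mod_cast card_filter_Icc_add_one_add_le A n m) n.cast_nonneg

lemma bddAbove_range_intervalDensity (A : Set ℤ) (n : ℕ) :
    BddAbove (Set.range (intervalDensity A n)) :=
  ⟨1, Set.forall_mem_range.2 (intervalDensity_le_one A n)⟩

lemma maxIntervalDensity_nonneg (A : Set ℤ) (n : ℕ) : 0 ≤ maxIntervalDensity A n :=
  (intervalDensity_nonneg A n 0).trans (le_ciSup (bddAbove_range_intervalDensity A n) 0)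

lemma maxIntervalDensity_le_one (A : Set ℤ) (n : ℕ) : maxIntervalDensity A n ≤ 1 :=
  ciSup_le (intervalDensity_le_one A n)

lemma intervalDensity_le_max (A : Set ℤ) (n : ℕ) (m : ℤ) :
    intervalDensity A n m ≤ maxIntervalDensity A n :=
  le_ciSup (bddAbove_range_intervalDensity A n) m

/-- `intervalDensity A n` takes only the finitely many values `k / n`, `k ≤ n`. -/
lemma exists_intervalDensity_eq_max (A : Set ℤ) (n : ℕ) :
    ∃ m, intervalDensity A n m = maxIntervalDensity A n := by
  have hfin : (Set.range (intervalDensity A n)).Finite := by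
    refine ((Set.finite_Iic n).image fun k : ℕ => (k : ℝ) / n).subset ?_
    rintro _ ⟨m, rfl⟩
    exact ⟨_, card_filter_Icc_add_one_add_le A n m, rfl⟩
  exact (Set.range_nonempty _).csSup_mem hfin

lemma card_Icc_inter_image_add (a g : ℤ) (n : ℕ) :
    #(Icc (a + 1) (a + n) ∩ (Icc (a + 1) (a + n)).image (g + ·)) = n - g.natAbs := by
  have hinter : Icc (a + 1) (a + n) ∩ Icc (g + (a + 1)) (g + (a + n)) =
      Icc (max (a + 1) (g + (a + 1))) (min (a + n) (g + (a + n))) := by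
    ext; simp only [mem_inter, mem_Icc]; omega
  rw [image_add_left_Icc, hinter, Int.card_Icc]
  omega

lemma isFolnerZ_Icc (a : ℕ → ℤ) (N : ℕ → ℕ) (hpos : ∀ n, 0 < N n)
    (hN : Tendsto N atTop atTop) :
    IsFolnerZ (fun n => Icc (a n + 1) (a n + N n)) := by
  refine ⟨fun n => nonempty_Icc.2 (by have := hpos n; omega), ?_, fun g => ?_⟩
  · simpa only [card_Icc_add_one_add] using hN
  have hlim : Tendsto (fun n => 1 - (g.natAbs : ℝ) / N n) atTop (nhds 1) := by
    simpa using tendsto_const_nhds.sub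
      ((tendsto_const_nhds (x := (g.natAbs : ℝ))).div_atTop
        (tendsto_natCast_atTop_atTop.comp hN))
  refine hlim.congr' ?_
  filter_upwards [hN.eventually_ge_atTop g.natAbs] with n hn
  have hNpos : (0 : ℝ) < N n := by exact_mod_cast hpos n
  rw [card_Icc_inter_image_add, card_Icc_add_one_add, Nat.cast_sub hn]
  field_simp

lemma card_filter_Icc_add_one_add_eq_sum (A : Set ℤ) (n : ℕ) (x : ℤ) :
    #((Icc (x + 1) (x + n)).filter (· ∈ A)) =
      ∑ t ∈ Icc (1 : ℤ) n, if x + t ∈ A then 1 else 0 := by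
  rw [← card_filter, ← image_add_left_Icc, filter_image,
    card_image_of_injective _ (add_right_injective x)]

lemma card_filter_le_card_filter_image_add (A : Set ℤ) (F : Finset ℤ) (t : ℤ) :
    #(F.filter (· ∈ A)) ≤ #(F.filter (fun x => x + t ∈ A)) + #(F \ F.image (t + ·)) := by
  have hsplit : F.filter (· ∈ A) ⊆
      (F.filter (fun x => x + t ∈ A)).image (t + ·) ∪ F \ F.image (t + ·) := by
    intro y hy
    rw [mem_filter] at hy
    by_cases hyt : y ∈ F.image (t + ·)
    · obtain ⟨x, hx, rfl⟩ := mem_image.1 hyt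
      exact mem_union_left _ (mem_image_of_mem _ (mem_filter.2 ⟨hx, add_comm t x ▸ hy.2⟩))
    · exact mem_union_right _ (mem_sdiff.2 ⟨hy.1, hyt⟩)
  calc #(F.filter (· ∈ A))
      ≤ #((F.filter (fun x => x + t ∈ A)).image (t + ·)) + #(F \ F.image (t + ·)) :=
        (card_le_card hsplit).trans (card_union_le _ _)
    _ ≤ _ := by grw [card_image_le]

/-- Counting the pairs `(x, t) ∈ F × [1, n]` with `x + t ∈ A` in two ways. -/
lemma mul_card_filter_le (A : Set ℤ) (F : Finset ℤ) (n : ℕ) :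
    n * #(F.filter (· ∈ A)) ≤
      ∑ x ∈ F, #((Icc (x + 1) (x + n)).filter (· ∈ A)) +
        ∑ t ∈ Icc (1 : ℤ) n, #(F \ F.image (t + ·)) := by
  calc n * #(F.filter (· ∈ A)) = ∑ t ∈ Icc (1 : ℤ) n, #(F.filter (· ∈ A)) := by simp
    _ ≤ ∑ t ∈ Icc (1 : ℤ) n,
          (#(F.filter (fun x => x + t ∈ A)) + #(F \ F.image (t + ·))) :=
      sum_le_sum fun t _ => card_filter_le_card_filter_image_add A F t
    _ = _ := by
      simp only [sum_add_distrib, card_filter_Icc_add_one_add_eq_sum]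
      simp only [card_filter]
      rw [sum_comm]

lemma card_filter_div_card_le (A : Set ℤ) {F : Finset ℤ} (hF : F.Nonempty) {n : ℕ}
    (hn : 0 < n) :
    (#(F.filter (· ∈ A)) : ℝ) / #F ≤ maxIntervalDensity A n +
      (∑ t ∈ Icc (1 : ℤ) n, (1 - (#(F ∩ F.image (t + ·)) : ℝ) / #F)) / n := by
  have hF' : (0 : ℝ) < #F := by exact_mod_cast hF.card_pos
  have hn' : (0 : ℝ) < n := by exact_mod_cast hn
  have hwindow (x : ℤ) :
      (#((Icc (x + 1) (x + n)).filter (· ∈ A)) : ℝ) ≤ n * maxIntervalDensity A n :=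
    (div_le_iff₀' hn').1 (intervalDensity_le_max A n x)
  have hdefect (t : ℤ) :
      (#(F \ F.image (t + ·)) : ℝ) = #F * (1 - (#(F ∩ F.image (t + ·)) : ℝ) / #F) := by
    rw [mul_one_sub, mul_div_cancel₀ _ hF'.ne', eq_sub_iff_add_eq]
    exact_mod_cast card_sdiff_add_card_inter F (F.image (t + ·))
  have hcount : (n : ℝ) * #(F.filter (· ∈ A)) ≤
      #F * (n * maxIntervalDensity A n +
        ∑ t ∈ Icc (1 : ℤ) n, (1 - (#(F ∩ F.image (t + ·)) : ℝ) / #F)) :=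
    calc (n : ℝ) * #(F.filter (· ∈ A))
        ≤ ∑ x ∈ F, (#((Icc (x + 1) (x + n)).filter (· ∈ A)) : ℝ) +
            ∑ t ∈ Icc (1 : ℤ) n, (#(F \ F.image (t + ·)) : ℝ) := by
          exact_mod_cast mul_card_filter_le A F n
      _ ≤ ∑ _x ∈ F, n * maxIntervalDensity A n +
            ∑ t ∈ Icc (1 : ℤ) n, #F * (1 - (#(F ∩ F.image (t + ·)) : ℝ) / #F) := by
          grw [sum_le_sum fun x _ => hwindow x, sum_congr rfl fun t _ => hdefect t]
      _ = _ := by rw [sum_const, nsmul_eq_mul, ← mul_sum, mul_add]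
  rw [div_le_iff₀ hF', ← mul_le_mul_iff_right₀ hn']
  calc (n : ℝ) * #(F.filter (· ∈ A)) ≤ _ := hcount
    _ = _ := by field_simp

lemma upperDensityZ_le_maxIntervalDensity {F : ℕ → Finset ℤ} (hF : IsFolnerZ F) (A : Set ℤ)
    {n : ℕ} (hn : 0 < n) : upperDensityZ F A ≤ maxIntervalDensity A n := by
  obtain ⟨hne, -, hfol⟩ := hF
  have hlim : Tendsto (fun j => maxIntervalDensity A n +
      (∑ t ∈ Icc (1 : ℤ) n, (1 - (#(F j ∩ (F j).image (t + ·)) : ℝ) / #(F j))) / n)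
      atTop (nhds (maxIntervalDensity A n)) := by
    have hsum := (tendsto_finsetSum (Icc (1 : ℤ) n)
      fun t _ => (tendsto_const_nhds (x := (1 : ℝ))).sub (hfol t)).div_const (n : ℝ)
    simpa only [sub_self, sum_const_zero, zero_div, add_zero] using tendsto_const_nhds.add hsum
  rw [← hlim.limsup_eq]
  exact limsup_le_limsup (Eventually.of_forall fun j => card_filter_div_card_le A (hne j) hn)
    (isCoboundedUnder_le_of_le atTop fun j => by positivity) hlim.isBoundedUnder_le

lemma upperDensityZ_le_limsup_maxIntervalDensity {F : ℕ → Finset ℤ} (hF : IsFolnerZ F)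
    (A : Set ℤ) : upperDensityZ F A ≤ limsup (maxIntervalDensity A) atTop :=
  calc upperDensityZ F A ≤ liminf (maxIntervalDensity A) atTop :=
        le_liminf_of_le (isCoboundedUnder_ge_of_le atTop (maxIntervalDensity_le_one A))
          ((eventually_gt_atTop 0).mono fun _ hn => upperDensityZ_le_maxIntervalDensity hF A hn)
    _ ≤ limsup (maxIntervalDensity A) atTop :=
        liminf_le_limsup (isBoundedUnder_of ⟨1, maxIntervalDensity_le_one A⟩)
          (isBoundedUnder_of ⟨0, maxIntervalDensity_nonneg A⟩)

lemma exists_isFolnerZ_upperDensityZ_eq_limsup (A : Set ℤ) :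
    ∃ F, IsFolnerZ F ∧ upperDensityZ F A = limsup (maxIntervalDensity A) atTop := by
  choose m hm using exists_intervalDensity_eq_max A
  refine ⟨fun n => Icc (m (n + 1) + 1) (m (n + 1) + (n + 1 : ℕ)),
    isFolnerZ_Icc _ _ Nat.succ_pos (tendsto_add_atTop_nat 1), ?_⟩
  rw [← limsup_nat_add _ 1]
  refine limsup_congr (Eventually.of_forall fun n => ?_)
  rw [card_Icc_add_one_add]
  exact hm (n + 1)

/-- Remark 3.3: for subsets of `ℤ`, the upper Banach density computed via Følner
sequences coincides with the interval-based upper Banach density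
`limsup_n sup_m |A ∩ [m+1, m+n]| / n`. -/
theorem banach_density_eq (A : Set ℤ) :
    sSup {x : ℝ | ∃ F : ℕ → Finset ℤ, IsFolnerZ F ∧ x = upperDensityZ F A} =
      limsup (fun n : ℕ =>
        ⨆ m : ℤ, (((Finset.Icc (m + 1) (m + (n : ℤ))).filter (· ∈ A)).card : ℝ) / (n : ℝ))
        atTop := by
  obtain ⟨F, hF, hFA⟩ := exists_isFolnerZ_upperDensityZ_eq_limsup A
  refine IsGreatest.csSup_eq ⟨⟨F, hF, hFA.symm⟩, ?_⟩
  rintro _ ⟨G, hG, rfl⟩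
  exact upperDensityZ_le_limsup_maxIntervalDensity hG A
end

section
/- Let A be a subset of ℤ, q a real number, n ≥ 1 a natural number, and F a finite nonempty subset of ℤ such that |A ∩ (i + F)| > q·|F| for every i with 1 ≤ i ≤ n. Then there exists m ∈ F such that |A ∩ [m+1, m+n]| > q·n. -/
open scoped Classical

/-!
Double counting: the pairs `(i, f) ∈ I × F` with `i + f ∈ A` are counted once by translates
`i + F` and once by translates `f + I`. So if every `i + F` meets `A` in more than `q·|F|`
points, the `|F|` translates `f + I` meet `A` in more than `q·|I|·|F|` points altogether, and one
of them meets it in more than `q·|I|`.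
-/

open Finset

section Translates

variable {G : Type*} [AddCancelCommMonoid G] [DecidableEq G]

lemma card_filter_image_add_left (A : Set G) (F : Finset G) (i : G) :
    #((F.image (i + ·)).filter (· ∈ A)) = #(F.filter (fun f => i + f ∈ A)) := by
  rw [filter_image]
  exact card_image_of_injective _ (add_right_injective i)

lemma sum_card_filter_image_add_left_comm (A : Set G) (I F : Finset G) :
    ∑ i ∈ I, #((F.image (i + ·)).filter (· ∈ A)) =
      ∑ f ∈ F, #((I.image (f + ·)).filter (· ∈ A)) := by
  rw [sum_congr rfl fun i _ => card_filter_image_add_left A F i,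
    sum_congr rfl fun f _ => card_filter_image_add_left A I f]
  simp only [card_filter]
  rw [sum_comm]
  simp only [add_comm]

theorem exists_lt_card_filter_image_add_left (A : Set G) (q : ℝ) (I F : Finset G)
    (hI : I.Nonempty)
    (h : ∀ i ∈ I, q * #F < #((F.image (i + ·)).filter (· ∈ A))) :
    ∃ f ∈ F, q * #I < #((I.image (f + ·)).filter (· ∈ A)) := by
  apply exists_lt_of_sum_lt
  calc ∑ _f ∈ F, q * #I = ∑ _i ∈ I, q * #F := by
        simp only [sum_const, nsmul_eq_mul]; ring
    _ < ∑ i ∈ I, (#((F.image (i + ·)).filter (· ∈ A)) : ℝ) := sum_lt_sum_of_nonempty hI h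
    _ = ∑ f ∈ F, (#((I.image (f + ·)).filter (· ∈ A)) : ℝ) := by
        exact_mod_cast sum_card_filter_image_add_left_comm A I F

end Translates

theorem exists_interval_of_translates_general (A : Set ℤ) (q : ℝ) (n : ℕ) (hn : 1 ≤ n)
    (F : Finset ℤ)
    (h : ∀ i : ℤ, 1 ≤ i → i ≤ (n : ℤ) →
      q * (F.card : ℝ) < (((F.image (i + ·)).filter (· ∈ A)).card : ℝ)) :
    ∃ m ∈ F, q * (n : ℝ) <
      (((Finset.Icc (m + 1) (m + (n : ℤ))).filter (· ∈ A)).card : ℝ) := by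
  have hcard : #(Icc (1 : ℤ) n) = n := by rw [Int.card_Icc]; omega
  have hne : (Icc (1 : ℤ) n).Nonempty := nonempty_Icc.2 (by exact_mod_cast hn)
  obtain ⟨m, hm, hlt⟩ := exists_lt_card_filter_image_add_left A q (Icc 1 n) F hne
    fun i hi => h i (mem_Icc.1 hi).1 (mem_Icc.1 hi).2
  rw [hcard, image_add_left_Icc] at hlt
  exact ⟨m, hm, hlt⟩

/-- The counting argument in Remark 3.3: if `|A ∩ (i + F)| > q·|F|` for every
`1 ≤ i ≤ n`, then some `m ∈ F` satisfies `|A ∩ [m+1, m+n]| > q·n`. -/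
theorem exists_interval_of_translates (A : Set ℤ) (q : ℝ) (n : ℕ) (hn : 1 ≤ n)
    (F : Finset ℤ) (hFne : F.Nonempty)
    (h : ∀ i : ℤ, 1 ≤ i → i ≤ (n : ℤ) →
      q * (F.card : ℝ) < (((F.image (i + ·)).filter (· ∈ A)).card : ℝ)) :
    ∃ m ∈ F, q * (n : ℝ) <
      (((Finset.Icc (m + 1) (m + (n : ℤ))).filter (· ∈ A)).card : ℝ) :=
  exists_interval_of_translates_general A q n hn F h
end

section
/- Let G be a countable group, F = (F_n) a Følner sequence in G, and A a subset of G with d̄_F(A) > 0. Then for every natural number m ≥ 1 there exist pairwise distinct elements h_1, …, h_m of A such that d̄_F(h_1⁻¹·A ∩ h_2⁻¹·A ∩ … ∩ h_m⁻¹·A) > 0; in particular, setting B = h_1⁻¹·A ∩ … ∩ h_m⁻¹·A and F_1 = {h_1, …, h_m}, one has F_1·B ⊆ A. -/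
open Filter Pointwise
open scoped Classical

/-!
Since `A` has positive upper density `a` and `|F n| → ∞`, `A` is infinite; fix `K` distinct
elements `t i ∈ A`. By the Følner property each translate `(t i)⁻¹ • A` eventually has density
in `F n` at least that of `A` minus `a / 4`, so for infinitely many `n` all `K` translates have
density at least `c = a / 4` in `F n`. For such `n` the power-mean inequality gives
`∑_p dens(⋂ j, (t (p j))⁻¹ • A) ≥ (K c) ^ m` over all `p : Fin m → Fin K`, while the
non-injective `p` number at most `m² K ^ (m - 1)`; for `K` large some injective `p` has
intersection density above `c ^ m / 2`. As there are finitely many `p`, one of them does so for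
infinitely many `n`.
-/

open Finset Function

section Combinatorics

variable {α : Type*}

noncomputable def densityIn (S : Finset α) (B : Set α) : ℝ :=
  #(S.filter (· ∈ B)) / #S

lemma densityIn_nonneg (S : Finset α) (B : Set α) : 0 ≤ densityIn S B := by
  unfold densityIn; positivity

lemma densityIn_le_one (S : Finset α) (B : Set α) : densityIn S B ≤ 1 :=
  div_le_one_of_le₀ (by exact_mod_cast card_filter_le _ _) (Nat.cast_nonneg _)

lemma sum_densityIn_eq {ι : Type*} [Fintype ι] (S : Finset α) (B : ι → Set α) :
    ∑ i, densityIn S (B i) = (∑ x ∈ S, ∑ i, if x ∈ B i then (1 : ℝ) else 0) / #S := by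
  simp only [densityIn, natCast_card_filter, ← sum_div]
  rw [sum_comm]

lemma pow_sum_densityIn_le_sum_densityIn_iInter {ι : Type*} [Fintype ι]
    (S : Finset α) (B : ι → Set α) (m : ℕ) :
    (∑ i, densityIn S (B i)) ^ (m + 1) ≤
      ∑ p : Fin (m + 1) → ι, densityIn S (⋂ j, B (p j)) := by
  set f : α → ℝ := fun x => ∑ i, if x ∈ B i then 1 else 0
  have hpow (x : α) :
      f x ^ (m + 1) = ∑ p : Fin (m + 1) → ι, if x ∈ ⋂ j, B (p j) then 1 else 0 := by
    simp only [f, ← Fin.prod_const, Fintype.prod_sum, prod_boole, Set.mem_iInter, mem_univ,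
      true_implies]
  have hmean := pow_sum_div_card_le_sum_pow (s := S) (f := f) (fun x _ => by positivity) m
  calc (∑ i, densityIn S (B i)) ^ (m + 1) = (∑ x ∈ S, f x) ^ (m + 1) / #S ^ m / #S := by
        rw [sum_densityIn_eq, div_pow, div_div, ← pow_succ]
    _ ≤ (∑ x ∈ S, f x ^ (m + 1)) / #S := by gcongr
    _ = ∑ p : Fin (m + 1) → ι, densityIn S (⋂ j, B (p j)) := by
        simp only [hpow, sum_densityIn_eq]

theorem Nat.pow_succ_le_descFactorial_add (n k : ℕ) :
    n ^ (k + 1) ≤ n.descFactorial (k + 1) + (k + 1) ^ 2 * n ^ k := by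
  induction k with
  | zero => simp
  | succ k ih =>
    have hstep : n * n.descFactorial (k + 1) ≤
        n.descFactorial (k + 2) + (k + 1) * n ^ (k + 1) := by
      rw [Nat.descFactorial_succ]
      calc n * n.descFactorial (k + 1)
          ≤ (n - (k + 1) + (k + 1)) * n.descFactorial (k + 1) := by gcongr; omega
        _ ≤ (n - (k + 1)) * n.descFactorial (k + 1) + (k + 1) * n ^ (k + 1) := by
          rw [add_mul]; gcongr; exact Nat.descFactorial_le_pow n (k + 1)
    calc n ^ (k + 2) = n * n ^ (k + 1) := by ring
      _ ≤ n * (n.descFactorial (k + 1) + (k + 1) ^ 2 * n ^ k) := by gcongr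
      _ = n * n.descFactorial (k + 1) + (k + 1) ^ 2 * n ^ (k + 1) := by ring
      _ ≤ n.descFactorial (k + 2) + (k + 1) * n ^ (k + 1) + (k + 1) ^ 2 * n ^ (k + 1) := by
        gcongr
      _ ≤ n.descFactorial (k + 2) + (k + 2) ^ 2 * n ^ (k + 1) := by
        rw [add_assoc, ← add_mul]; gcongr; nlinarith

lemma card_not_injective_le (n k : ℕ) :
    #{p : Fin (k + 1) → Fin n | ¬ Injective p} ≤ (k + 1) ^ 2 * n ^ k := by
  have hinj : #{p : Fin (k + 1) → Fin n | Injective p} = n.descFactorial (k + 1) := by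
    rw [← Fintype.card_subtype, Fintype.card_congr (Equiv.subtypeInjectiveEquivEmbedding _ _),
      Fintype.card_embedding_eq, Fintype.card_fin, Fintype.card_fin]
  have hsplit :=
    card_filter_add_card_filter_not (s := univ) fun p : Fin (k + 1) → Fin n => Injective p
  rw [hinj, card_univ, Fintype.card_fun, Fintype.card_fin, Fintype.card_fin] at hsplit
  have := Nat.pow_succ_le_descFactorial_add n k
  omega

lemma exists_injective_lt_densityIn_iInter {n k : ℕ} (S : Finset α) (B : Fin n → Set α) {c : ℝ}
    (hc : 0 < c) (hn : (k + 1) ^ 2 < c ^ (k + 1) / 2 * n) (hB : ∀ i, c ≤ densityIn S (B i)) :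
    ∃ p : Fin (k + 1) → Fin n, Injective p ∧ c ^ (k + 1) / 2 < densityIn S (⋂ j, B (p j)) := by
  set d : (Fin (k + 1) → Fin n) → ℝ := fun p => densityIn S (⋂ j, B (p j))
  have hn_pos : (0 : ℝ) < n := pos_of_mul_pos_right ((by positivity : (0 : ℝ) < _).trans hn)
    (by positivity)
  have hmoment : (n * c) ^ (k + 1) ≤ ∑ p, d p := by
    refine le_trans ?_ (pow_sum_densityIn_le_sum_densityIn_iInter S B k)
    gcongr
    simpa using sum_le_sum fun i (_ : i ∈ univ) => hB i
  have hnoninj : ∑ p with ¬ Injective p, d p ≤ (k + 1) ^ 2 * n ^ k := by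
    refine (sum_le_card_nsmul _ _ 1 fun p _ => densityIn_le_one _ _).trans ?_
    simpa using (Nat.cast_le (α := ℝ)).2 (card_not_injective_le n k)
  have hinj : (#{p : Fin (k + 1) → Fin n | Injective p} : ℝ) ≤ n ^ (k + 1) := by
    simpa using (Nat.cast_le (α := ℝ)).2
      (card_filter_le univ fun p : Fin (k + 1) → Fin n => Injective p)
  obtain ⟨p, hp, hlt⟩ := exists_lt_of_sum_lt (s := {p | Injective p})
    (f := fun _ => c ^ (k + 1) / 2) (g := d) <| by
    calc ∑ _p with Injective _p, c ^ (k + 1) / 2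
        = #{p : Fin (k + 1) → Fin n | Injective p} * (c ^ (k + 1) / 2) := by
          rw [sum_const, nsmul_eq_mul]
      _ ≤ n ^ (k + 1) * (c ^ (k + 1) / 2) := by gcongr
      _ < (n * c) ^ (k + 1) - (k + 1) ^ 2 * n ^ k := by
        have := mul_lt_mul_of_pos_left hn (pow_pos hn_pos k)
        rw [mul_pow, pow_succ _ k]; nlinarith
      _ ≤ ∑ p with Injective p, d p := by
        linarith [sum_filter_add_sum_filter_not univ (fun p => Injective p) d]
  exact ⟨p, (mem_filter.1 hp).2, hlt⟩

end Combinatorics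

section Group

variable {G : Type*} [Group G]

lemma card_filter_le_card_filter_inv_smul_add (S : Finset G) (A : Set G) (g : G) :
    #(S.filter (· ∈ A)) ≤ #(S.filter (· ∈ g⁻¹ • A)) + #(S \ S.image (g * ·)) := by
  calc #(S.filter (· ∈ A))
      ≤ #((S.filter (· ∈ g⁻¹ • A)).image (g * ·) ∪ (S \ S.image (g * ·))) := by
        refine card_le_card fun x hx => ?_
        rw [mem_filter] at hx
        by_cases hxg : x ∈ S.image (g * ·)
        · obtain ⟨y, hy, rfl⟩ := mem_image.1 hxg
          refine mem_union_left _ (mem_image_of_mem _ (mem_filter.2 ⟨hy, ?_⟩))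
          simpa [Set.mem_inv_smul_set_iff] using hx.2
        · exact mem_union_right _ (mem_sdiff.2 ⟨hx.1, hxg⟩)
    _ ≤ #(S.filter (· ∈ g⁻¹ • A)) + #(S \ S.image (g * ·)) :=
        (card_union_le _ _).trans (add_le_add_left card_image_le _)

lemma densityIn_le_densityIn_inv_smul_add (S : Finset G) (A : Set G) (g : G) :
    densityIn S A ≤ densityIn S (g⁻¹ • A) + (1 - #(S ∩ S.image (g * ·)) / #S) := by
  rcases S.eq_empty_or_nonempty with rfl | hS
  · simp [densityIn]
  have hS' : (0 : ℝ) < #S := by exact_mod_cast hS.card_pos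
  have hcard : #(S.filter (· ∈ A)) + #(S ∩ S.image (g * ·)) ≤
      #(S.filter (· ∈ g⁻¹ • A)) + #S := by
    have hsdiff := card_filter_le_card_filter_inv_smul_add S A g
    rw [card_sdiff, inter_comm] at hsdiff
    have hle : #(S ∩ S.image (g * ·)) ≤ #S := card_le_card inter_subset_left
    omega
  have hcard' := (Nat.cast_le (α := ℝ)).2 hcard
  push_cast at hcard'
  rw [densityIn, densityIn, one_sub_div hS'.ne', ← add_div, div_le_div_iff_of_pos_right hS']
  linarith

end Group

section Folner

variable {G : Type*} [Group G] {F : ℕ → Finset G}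

lemma frequently_lt_densityIn_of_lt_upperDensity {B : Set G} {δ : ℝ}
    (h : δ < upperDensity F B) : ∃ᶠ n in atTop, δ < densityIn (F n) B :=
  frequently_lt_of_lt_limsup
    (isBoundedUnder_of ⟨0, fun _ => densityIn_nonneg _ _⟩).isCoboundedUnder_le h

lemma le_upperDensity_of_frequently_le {B : Set G} {δ : ℝ}
    (h : ∃ᶠ n in atTop, δ ≤ densityIn (F n) B) : δ ≤ upperDensity F B :=
  le_limsup_of_frequently_le h (isBoundedUnder_of ⟨1, fun _ => densityIn_le_one _ _⟩)

lemma upperDensity_eq_zero_of_finite (hF : Tendsto (fun n => #(F n)) atTop atTop) {A : Set G}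
    (hA : A.Finite) : upperDensity F A = 0 := by
  have hbound : Tendsto (fun n => (#hA.toFinset : ℝ) / #(F n)) atTop (nhds 0) :=
    tendsto_const_nhds.div_atTop (tendsto_natCast_atTop_atTop.comp hF)
  refine (tendsto_of_tendsto_of_tendsto_of_le_of_le tendsto_const_nhds hbound
    (fun _ => densityIn_nonneg _ _) fun n => ?_).limsup_eq
  refine div_le_div_of_nonneg_right (Nat.cast_le.2 (card_le_card fun x hx => ?_))
    (Nat.cast_nonneg _)
  simpa using (mem_filter.1 hx).2

lemma IsFolner.eventually_densityIn_sub_le_densityIn_inv_smul (hF : IsFolner F) (A : Set G)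
    (g : G) {ε : ℝ} (hε : 0 < ε) :
    ∀ᶠ n in atTop, densityIn (F n) A - ε ≤ densityIn (F n) (g⁻¹ • A) := by
  filter_upwards [(hF.2.2 g).eventually (eventually_gt_nhds (sub_lt_self 1 hε))] with n hn
  linarith [densityIn_le_densityIn_inv_smul_add (F n) A g]

lemma exists_injective_upperDensity_iInter_pos {n k : ℕ} (B : Fin n → Set G) {c : ℝ}
    (hc : 0 < c) (hn : (k + 1) ^ 2 < c ^ (k + 1) / 2 * n)
    (hB : ∃ᶠ N in atTop, ∀ i, c ≤ densityIn (F N) (B i)) :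
    ∃ p : Fin (k + 1) → Fin n, Injective p ∧ 0 < upperDensity F (⋂ j, B (p j)) := by
  obtain ⟨p, hp⟩ := frequently_exists.1 <|
    hB.mono fun N hN => exists_injective_lt_densityIn_iInter (F N) B hc hn hN
  obtain ⟨-, hinj, -⟩ := hp.exists
  exact ⟨p, hinj, (by positivity : (0 : ℝ) < c ^ (k + 1) / 2).trans_le
    (le_upperDensity_of_frequently_le (hp.mono fun N hN => hN.2.le))⟩

end Folner

lemma range_mul_iInter_inv_smul_subset {G ι : Type*} [Group G] (h : ι → G) (A : Set G) :
    Set.range h * ⋂ i, (h i)⁻¹ • A ⊆ A := by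
  rintro _ ⟨_, ⟨i, rfl⟩, y, hy, rfl⟩
  simpa [Set.mem_inv_smul_set_iff] using Set.mem_iInter.1 hy i

theorem translates_wide_step_general {G : Type*} [Group G]
    (F : ℕ → Finset G) (hF : IsFolner F)
    (A : Set G) (hA : 0 < upperDensity F A) (m : ℕ) (hm : 1 ≤ m) :
    ∃ h : Fin m → G, Function.Injective h ∧ (∀ i, h i ∈ A) ∧
      0 < upperDensity F (⋂ i, (h i)⁻¹ • A) ∧
      (Set.range h) * (⋂ i, (h i)⁻¹ • A) ⊆ A := by
  obtain ⟨k, rfl⟩ := Nat.exists_eq_add_of_le' hm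
  set a := upperDensity F A
  have ha : 0 < a / 4 := by positivity
  obtain ⟨n, hn⟩ := exists_nat_gt ((k + 1) ^ 2 / ((a / 4) ^ (k + 1) / 2))
  rw [div_lt_iff₀ (by positivity), mul_comm] at hn
  have hAinf : A.Infinite := fun hfin => hA.ne' (upperDensity_eq_zero_of_finite hF.2.1 hfin)
  set t : Fin n → G := fun i => hAinf.natEmbedding A i
  have ht : Injective t :=
    Subtype.val_injective.comp ((hAinf.natEmbedding A).injective.comp Fin.val_injective)
  have hdense : ∃ᶠ N in atTop, ∀ i, a / 4 ≤ densityIn (F N) ((t i)⁻¹ • A) := by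
    refine ((frequently_lt_densityIn_of_lt_upperDensity (half_lt_self hA)).and_eventually
      (eventually_all.2 fun i =>
        hF.eventually_densityIn_sub_le_densityIn_inv_smul A (t i) ha)).mono ?_
    rintro N ⟨hN, hNt⟩ i
    linarith [hNt i]
  obtain ⟨p, hp, hpos⟩ := exists_injective_upperDensity_iInter_pos _ ha hn hdense
  exact ⟨t ∘ p, ht.comp hp, fun j => (hAinf.natEmbedding A _).2, hpos,
    range_mul_iInter_inv_smul_subset _ _⟩

/-- The key step of Proposition 3.5: if `A` has positive upper density with respect to
the Følner sequence `F`, then for every `m ≥ 1` there are pairwise distinct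
`h₁, …, h_m ∈ A` such that `B = h₁⁻¹·A ∩ ⋯ ∩ h_m⁻¹·A` still has positive upper
density; in particular `{h₁, …, h_m} · B ⊆ A`. -/
theorem translates_wide_step {G : Type*} [Group G] [Countable G]
    (F : ℕ → Finset G) (hF : IsFolner F)
    (A : Set G) (hA : 0 < upperDensity F A) (m : ℕ) (hm : 1 ≤ m) :
    ∃ h : Fin m → G, Function.Injective h ∧ (∀ i, h i ∈ A) ∧
      0 < upperDensity F (⋂ i, (h i)⁻¹ • A) ∧
      (Set.range h) * (⋂ i, (h i)⁻¹ • A) ⊆ A :=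
  translates_wide_step_general F hF A hA m hm
end

section
/- Let G be a group and A a stable subset of G. Suppose there exist injective sequences (b_k)_{k∈ℕ} and (c_m)_{m∈ℕ} in G such that b_k·c_m ∈ A whenever k ≤ m. Then there exist infinite subsets B of {b_k : k ∈ ℕ} and C of {c_m : m ∈ ℕ} such that B·C ⊆ A, where B·C = {b·c : b ∈ B, c ∈ C}. -/
open Pointwise

private lemma step_lemma (r : ℕ → ℕ → Bool) (X : Set ℕ) (hX : X.Infinite) :
    ∃ x ∈ X, ∃ Y : Set ℕ, Y.Infinite ∧ Y ⊆ X ∧ (∀ y ∈ Y, x < y) ∧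
      ∃ col : Bool, ∀ y ∈ Y, r x y = col := by
  obtain ⟨x, hx⟩ := hX.nonempty
  have hD : (X \ Set.Iic x).Infinite := hX.diff (Set.finite_Iic x)
  have hsplit : (X \ Set.Iic x) =
      {y ∈ X \ Set.Iic x | r x y = true} ∪ {y ∈ X \ Set.Iic x | r x y = false} := by
    ext y; simp only [Set.mem_union, Set.mem_setOf_eq]
    cases hr : r x y <;> tauto
  rw [hsplit] at hD
  rcases Set.infinite_union.mp hD with h1 | h1
  · exact ⟨x, hx, _, h1, fun y hy => hy.1.1, fun y hy => lt_of_not_ge hy.1.2,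
      true, fun y hy => hy.2⟩
  · exact ⟨x, hx, _, h1, fun y hy => hy.1.1, fun y hy => lt_of_not_ge hy.1.2,
      false, fun y hy => hy.2⟩

/-- Infinite Ramsey theorem for 2-colourings of pairs (in the form we need). -/
private lemma ramsey2 (r : ℕ → ℕ → Bool) :
    ∃ (e : ℕ → ℕ) (col : Bool), StrictMono e ∧ ∀ i j : ℕ, i < j → r (e i) (e j) = col := by
  classical
  have key : ∀ s : {X : Set ℕ // X.Infinite}, ∃ p : {X : Set ℕ // X.Infinite} × ℕ × Bool,
      p.2.1 ∈ s.1 ∧ p.1.1 ⊆ s.1 ∧ (∀ y ∈ p.1.1, p.2.1 < y ∧ r p.2.1 y = p.2.2) := by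
    rintro ⟨X, hX⟩
    obtain ⟨x, hx, Y, hYinf, hYX, hYgt, col, hcol⟩ := step_lemma r X hX
    exact ⟨⟨⟨Y, hYinf⟩, x, col⟩, hx, hYX, fun y hy => ⟨hYgt y hy, hcol y hy⟩⟩
  choose F hF1 hF2 hF3 using key
  set chain : ℕ → {X : Set ℕ // X.Infinite} :=
    fun n => (fun s => (F s).1)^[n] ⟨Set.univ, Set.infinite_univ⟩ with hchain_def
  have hchain : ∀ n, chain (n + 1) = (F (chain n)).1 := fun n => by
    simp only [hchain_def, Function.iterate_succ_apply']
  set x : ℕ → ℕ := fun n => (F (chain n)).2.1 with hx_def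
  set col : ℕ → Bool := fun n => (F (chain n)).2.2 with hcol_def
  -- nesting of the chain
  have hnest : ∀ i j : ℕ, i ≤ j → (chain j).1 ⊆ (chain i).1 := by
    intro i j hij
    induction j with
    | zero => simp_all
    | succ j ih =>
      rcases Nat.lt_or_ge i (j + 1) with hlt | hge
      · intro y hy
        rw [hchain j] at hy
        exact ih (Nat.lt_succ_iff.mp hlt) (hF2 (chain j) hy)
      · have : i = j + 1 := le_antisymm hij hge
        subst this; exact fun y hy => hy
  have hmem : ∀ j : ℕ, x j ∈ (chain j).1 := fun j => hF1 (chain j)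
  have hkey : ∀ i j : ℕ, i < j → x i < x j ∧ r (x i) (x j) = col i := by
    intro i j hij
    have : x j ∈ (F (chain i)).1.1 := by
      have := hnest (i + 1) j hij
      rw [hchain i] at this
      exact this (hmem j)
    exact hF3 (chain i) _ this
  have hmono : StrictMono x := strictMono_nat_of_lt_succ fun n =>
    (hkey n (n + 1) (Nat.lt_succ_self n)).1
  -- pigeonhole on col
  have hpig : ∃ cl : Bool, {n : ℕ | col n = cl}.Infinite := by
    have : (Set.univ : Set ℕ).Infinite := Set.infinite_univ
    have hcover : (Set.univ : Set ℕ) = {n | col n = true} ∪ {n | col n = false} := by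
      ext n; simp only [Set.mem_univ, Set.mem_union, Set.mem_setOf_eq]
      cases hc : col n <;> tauto
    rw [hcover] at this
    rcases Set.infinite_union.mp this with h1 | h1
    exacts [⟨true, h1⟩, ⟨false, h1⟩]
  obtain ⟨cl, hcl⟩ := hpig
  refine ⟨x ∘ Nat.nth (fun n => col n = cl), cl,
    hmono.comp (Nat.nth_strictMono hcl), fun i j hij => ?_⟩
  have hij' : Nat.nth (fun n => col n = cl) i < Nat.nth (fun n => col n = cl) j :=
    Nat.nth_strictMono hcl hij
  have := (hkey _ _ hij').2
  rwa [Nat.nth_mem_of_infinite hcl i] at this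

/-- A subset `A` of a group is stable if there are no sequences `(b i)` and `(c j)`
with `b i * c j ∈ A ↔ i ≤ j`. -/
def IsStableSet {G : Type*} [Group G] (A : Set G) : Prop :=
  ¬ ∃ b c : ℕ → G, ∀ i j : ℕ, b i * c j ∈ A ↔ i ≤ j

/-- The Ramsey-type step in the proof of Proposition 3.7: for a stable set `A`, a
"half-graph" configuration `b k · c m ∈ A` for `k ≤ m` (with both sequences
injective) can be refined to a genuine product set `B · C ⊆ A` with `B` and `C`
infinite. -/
theorem stable_halfgraph_to_product {G : Type*} [Group G]
    (A : Set G) (hstable : IsStableSet A)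
    (b c : ℕ → G) (hb : Function.Injective b) (hc : Function.Injective c)
    (h : ∀ k m : ℕ, k ≤ m → b k * c m ∈ A) :
    ∃ B C : Set G, B ⊆ Set.range b ∧ C ⊆ Set.range c ∧
      B.Infinite ∧ C.Infinite ∧ B * C ⊆ A := by
  classical
  -- colour the pair i < j by whether the "reversed" product b j * c i lies in A
  obtain ⟨e, col, hemono, hecol⟩ := ramsey2 (fun i j => decide (b j * c i ∈ A))
  cases col with
  | false =>
    -- this would give a half-graph witnessing instability
    exfalso
    apply hstable
    refine ⟨b ∘ e, c ∘ e, fun i j => ?_⟩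
    simp only [Function.comp]
    constructor
    · intro hmem
      by_contra hij
      have hji : j < i := lt_of_not_ge hij
      have := hecol j i hji
      simp only [decide_eq_false_iff_not] at this
      exact this hmem
    · intro hij
      exact h _ _ (hemono.monotone hij)
  | true =>
    refine ⟨b '' Set.range e, c '' Set.range e, Set.image_subset_range b _, ?_, ?_, ?_, ?_⟩
    · exact fun y ⟨n, _, hn⟩ => ⟨n, hn⟩
    · exact ((Set.infinite_range_of_injective hemono.injective).image
        (hb.injOn)).mono Set.Subset.rfl
    · exact ((Set.infinite_range_of_injective hemono.injective).image
        (hc.injOn)).mono Set.Subset.rfl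
    · rintro z hz
      rw [Set.mem_mul] at hz
      obtain ⟨u, ⟨i', ⟨i, rfl⟩, rfl⟩, v, ⟨j', ⟨j, rfl⟩, rfl⟩, rfl⟩ := hz
      rcases le_or_gt i j with hij | hij
      · exact h _ _ (hemono.monotone hij)
      · have := hecol j i hij
        simpa using this
end

section
/- Let G be a group, (a_k)_{k∈ℕ} a sequence of elements of G, and (S_k)_{k∈ℕ} a sequence of subsets of G such that a_k ∈ S_k for every k and S_{k+1} = S_k ∩ a_k⁻¹·S_k for every k. Then for every m ≥ 1 and all indices i_1 < i_2 < … < i_m, the product a_{i_1}·a_{i_2}·…·a_{i_m} belongs to S_{i_1}; in particular, every such finite ordered product belongs to S_0. -/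
open Pointwise

lemma IP_aux {G : Type*} [Group G] (a : ℕ → G) (S : ℕ → Set G)
    (ha : ∀ k, a k ∈ S k)
    (hS : ∀ k, S (k + 1) = S k ∩ (a k)⁻¹ • S k) :
    ∀ (m : ℕ) (i : Fin (m + 1) → ℕ), StrictMono i →
      (List.ofFn (fun j => a (i j))).prod ∈ S (i 0) := by
  have anti : Antitone S := antitone_nat_of_succ_le fun n => by
    rw [hS n]; exact Set.inter_subset_left
  intro m
  induction m with
  | zero =>
    intro i _
    simp [List.ofFn_succ, ha]
  | succ m IH =>
    intro i hi
    have h1 : (List.ofFn (fun j : Fin (m + 1) => a (i j.succ))).prod ∈ S (i 1) :=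
      IH (fun j => i j.succ) (fun x y hxy => hi (by simpa using hxy))
    have h2 : S (i 1) ⊆ S (i 0 + 1) := anti (hi (by simp : (0 : Fin (m+2)) < 1))
    have h3 := h2 h1
    rw [hS (i 0)] at h3
    have h4 := h3.2
    rw [Set.mem_inv_smul_set_iff, smul_eq_mul] at h4
    rw [List.ofFn_succ]
    simpa using h4

/-- The induction in the proof of Theorem 3.9: if `a k ∈ S k` for all `k` and
`S (k+1) = S k ∩ (a k)⁻¹ · S k`, then every finite ordered product
`a i₁ ⋯ a i_m` (with `i₁ < ⋯ < i_m`) lies in `S i₁`, and in particular in `S 0`. -/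
theorem IP_products_mem {G : Type*} [Group G] (a : ℕ → G) (S : ℕ → Set G)
    (ha : ∀ k, a k ∈ S k)
    (hS : ∀ k, S (k + 1) = S k ∩ (a k)⁻¹ • S k) :
    ∀ (m : ℕ) (hm : 1 ≤ m) (i : Fin m → ℕ), StrictMono i →
      (List.ofFn (fun j => a (i j))).prod ∈ S (i ⟨0, hm⟩) ∧
      (List.ofFn (fun j => a (i j))).prod ∈ S 0 := by
  have anti : Antitone S := antitone_nat_of_succ_le fun n => by
    rw [hS n]; exact Set.inter_subset_left
  rintro (_ | m) hm i hi
  · omega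
  · have h := IP_aux a S ha hS m i hi
    exact ⟨h, anti (Nat.zero_le _) h⟩
end
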